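/- Let (R_n, X_n) be a hidden Markov walk on E × V with E finite, R = (R_n), increments F_j = X_j − X_{j−1}, and let f(u) = E_ν[F_1 | R_1 = u]. Then for every l ≥ 1 and N ≥ 1, the conditional expectation of the l-th iterated sum satisfies E[ Σ_{1≤j_1<...<j_l≤N} F_{j_1} ⊗ ... ⊗ F_{j_l} | σ(R) ] = Σ_{(u_1,...,u_l) ∈ E^l} (f(u_1) ⊗ ... ⊗ f(u_l)) · L_{u_1,...,u_l;N}(R), where L_{u_1,...,u_l;N}(R) is the iterated occupation time. -/

import Mathlib

/-!
Conditionally on `σ(R)`, increments at distinct times are independent with means `f (R_k)`. Hence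
on every cylinder `{R_0 = q_0, ..., R_n = q_n}` with `n ≥ N`, a coordinate product
`F_{j_1}(c_1) ⋯ F_{j_l}(c_l)` has the same integral as `f(R_{j_1})(c_1) ⋯ f(R_{j_l})(c_l)`, which is
`σ(R)`-measurable. These cylinders form a π-system generating `σ(R)`, so the conditional
expectation of the iterated sum is the iterated sum of the means `f (R_j)`; grouping its terms
according to the values `(R_{j_1}, ..., R_{j_l})` produces the occupation times.
-/

open MeasureTheory Finset

/-- The iterated occupation time `L_{u_1,...,u_l;N}(R)`. -/
def iterOcc {Ω E : Type*} [DecidableEq E] (R : ℕ → Ω → E) {l : ℕ} (u : Fin l → E)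
    (N : ℕ) (ω : Ω) : ℕ :=
  (Finset.univ.filter (fun s : Fin l → Fin (N + 1) =>
    (∀ i j : Fin l, i < j → s i < s j) ∧ ∀ i, 1 ≤ (s i : ℕ) ∧ R (s i) ω = u i)).card

theorem MeasureTheory.setIntegral_eq_of_isPiSystem {α G : Type*} [NormedAddCommGroup G]
    [NormedSpace ℝ G] {m m0 : MeasurableSpace α} {μ : Measure α} (hm : m ≤ m0)
    {S : Set (Set α)} (h_eq : m = MeasurableSpace.generateFrom S) (h_inter : IsPiSystem S)
    {f g : α → G} (hf : Integrable f μ) (hg : Integrable g μ)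
    (basic : ∀ t ∈ S, ∫ x in t, f x ∂μ = ∫ x in t, g x ∂μ)
    (h_univ : ∫ x, f x ∂μ = ∫ x, g x ∂μ) {t : Set α} (ht : MeasurableSet[m] t) :
    ∫ x in t, f x ∂μ = ∫ x in t, g x ∂μ := by
  induction t, ht using MeasurableSpace.induction_on_inter h_eq h_inter with
  | empty => simp
  | basic t ht => exact basic t ht
  | compl t ht ih =>
    rw [← add_right_inj (∫ x in t, f x ∂μ), integral_add_compl (hm t ht) hf, ih,
      integral_add_compl (hm t ht) hg, h_univ]
  | iUnion t hdisj ht ih =>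
    rw [integral_iUnion (fun i => hm _ (ht i)) hdisj hf.integrableOn,
      integral_iUnion (fun i => hm _ (ht i)) hdisj hg.integrableOn]
    exact tsum_congr ih

lemma Fin.clamp_val_self {n : ℕ} (k : Fin (n + 1)) : Fin.clamp k n = k :=
  Fin.ext (min_eq_left (Nat.lt_succ_iff.mp k.2))

section PathCylinder

variable {Ω E : Type*}

/-- `σ(R)`. -/
abbrev pathSigma [MeasurableSpace E] (R : ℕ → Ω → E) : MeasurableSpace Ω :=
  ⨆ n, MeasurableSpace.comap (R n) inferInstance

lemma measurable_pathSigma [MeasurableSpace E] (R : ℕ → Ω → E) (n : ℕ) :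
    Measurable[pathSigma R] (R n) :=
  Measurable.of_comap_le (le_iSup (fun k => MeasurableSpace.comap (R k) inferInstance) n)

lemma pathSigma_le [MeasurableSpace E] [m0 : MeasurableSpace Ω] {R : ℕ → Ω → E}
    (hR : ∀ n, Measurable (R n)) : pathSigma R ≤ m0 :=
  iSup_le fun n => (hR n).comap_le

def pathPrefix (R : ℕ → Ω → E) (n : ℕ) (ω : Ω) : Fin (n + 1) → E :=
  fun k => R k ω

def pathCylinder (R : ℕ → Ω → E) (n : ℕ) (q : Fin (n + 1) → E) : Set Ω :=
  pathPrefix R n ⁻¹' {q}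

lemma apply_eq_of_mem_pathCylinder {R : ℕ → Ω → E} {n : ℕ} {q : Fin (n + 1) → E} {ω : Ω}
    (hω : ω ∈ pathCylinder R n q) {i : ℕ} (hi : i ≤ n) : R i ω = q (Fin.clamp i n) := by
  rw [← hω]
  simp [pathPrefix, Fin.coe_clamp, hi]

lemma pathCylinder_eq_setOf (R : ℕ → Ω → E) (n : ℕ) (q : Fin (n + 1) → E) :
    pathCylinder R n q = {ω | ∀ i ≤ n, R i ω = q (Fin.clamp i n)} := by
  refine Set.ext fun ω => ⟨fun hω i hi => apply_eq_of_mem_pathCylinder hω hi, fun hω => ?_⟩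
  funext k
  have hk := hω k (Nat.lt_succ_iff.mp k.2)
  rwa [Fin.clamp_val_self] at hk

lemma iUnion_pathCylinder (R : ℕ → Ω → E) (n : ℕ) : ⋃ q, pathCylinder R n q = Set.univ :=
  Set.eq_univ_of_forall fun ω => Set.mem_iUnion.2 ⟨pathPrefix R n ω, rfl⟩

lemma pairwise_disjoint_pathCylinder (R : ℕ → Ω → E) (n : ℕ) :
    Pairwise (Function.onFun Disjoint (pathCylinder R n)) :=
  fun _ _ hne => (Set.disjoint_singleton.2 hne).preimage _

lemma pathCylinder_subset_of_le {R : ℕ → Ω → E} {n m : ℕ} (hnm : n ≤ m) {q : Fin (n + 1) → E}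
    {q' : Fin (m + 1) → E} (hne : (pathCylinder R n q ∩ pathCylinder R m q').Nonempty) :
    pathCylinder R m q' ⊆ pathCylinder R n q := by
  obtain ⟨ω, hω, hω'⟩ := hne
  intro ω' hω''
  rw [pathCylinder_eq_setOf] at hω hω' hω'' ⊢
  intro i hi
  rw [← hω i hi, hω' i (hi.trans hnm), hω'' i (hi.trans hnm)]

lemma isPiSystem_pathCylinder (R : ℕ → Ω → E) (N : ℕ) :
    IsPiSystem {t | ∃ n ≥ N, ∃ q, t = pathCylinder R n q} := by
  rintro _ ⟨n, hn, q, rfl⟩ _ ⟨m, hm, q', rfl⟩ hne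
  rcases le_total n m with hnm | hmn
  · rw [Set.inter_eq_right.2 (pathCylinder_subset_of_le hnm hne)]
    exact ⟨m, hm, q', rfl⟩
  · rw [Set.inter_comm] at hne ⊢
    rw [Set.inter_eq_right.2 (pathCylinder_subset_of_le hmn hne)]
    exact ⟨n, hn, q, rfl⟩

variable [MeasurableSpace E]

lemma measurable_pathPrefix (R : ℕ → Ω → E) (n : ℕ) :
    Measurable[pathSigma R] (pathPrefix R n) :=
  letI := pathSigma R
  measurable_pi_lambda _ fun k => measurable_pathSigma R k

variable [MeasurableSingletonClass E]

lemma measurableSet_pathCylinder [Countable E] (R : ℕ → Ω → E) (n : ℕ) (q : Fin (n + 1) → E) :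
    MeasurableSet[pathSigma R] (pathCylinder R n q) :=
  measurable_pathPrefix R n (measurableSet_singleton q)

lemma pathSigma_eq_generateFrom [Countable E] (R : ℕ → Ω → E) (N : ℕ) :
    pathSigma R = MeasurableSpace.generateFrom {t | ∃ n ≥ N, ∃ q, t = pathCylinder R n q} := by
  refine le_antisymm (iSup_le fun k => Measurable.comap_le ?_) (MeasurableSpace.generateFrom_le ?_)
  · let _ := MeasurableSpace.generateFrom {t | ∃ n ≥ N, ∃ q, t = pathCylinder R n q}
    have hprefix : Measurable (pathPrefix R (max k N)) := measurable_to_countable' fun q =>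
      MeasurableSpace.measurableSet_generateFrom ⟨max k N, le_max_right k N, q, rfl⟩
    exact (measurable_pi_apply (⟨k, Nat.lt_succ_of_le (le_max_left k N)⟩ : Fin _)).comp hprefix
  · rintro _ ⟨n, -, q, rfl⟩
    exact measurableSet_pathCylinder R n q

lemma stronglyMeasurable_comp_pathPrefix [Countable E] {β : Type*} [TopologicalSpace β]
    (R : ℕ → Ω → E) (n : ℕ) (Φ : (Fin (n + 1) → E) → β) :
    StronglyMeasurable[pathSigma R] (fun ω => Φ (pathPrefix R n ω)) :=
  StronglyMeasurable.of_discrete.comp_measurable (measurable_pathPrefix R n)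

lemma integrable_comp_pathPrefix [Finite E] [MeasurableSpace Ω] {μ : Measure Ω}
    [IsFiniteMeasure μ] {R : ℕ → Ω → E} (hR : ∀ n, Measurable (R n)) {β : Type*}
    [NormedAddCommGroup β] (n : ℕ) (Φ : (Fin (n + 1) → E) → β) :
    Integrable (fun ω => Φ (pathPrefix R n ω)) μ :=
  Integrable.of_finite.comp_measurable (measurable_pi_lambda _ fun k => hR k)

end PathCylinder

section CondIndepIncrements

variable {Ω E V : Type*} [MeasurableSpace E] [MeasurableSpace V]

/-- Conditionally on `σ(R)`, the increments `F k`, `k ≥ 1`, are independent with laws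
`ν (R k)`. -/
structure CondIndepIncrements [MeasurableSpace Ω] (μ : Measure Ω) (R : ℕ → Ω → E)
    (F : ℕ → Ω → V) (ν : E → Measure V) : Prop where
  measurable_R : ∀ n, Measurable (R n)
  measurable_F : ∀ n, Measurable (F n)
  isProbabilityMeasure_ν : ∀ u, IsProbabilityMeasure (ν u)
  measure_inter_setOf_path : ∀ (n : ℕ) (path : ℕ → E) (B : ℕ → Set V),
    (∀ k, MeasurableSet (B k)) →
      μ {ω | (∀ i ≤ n, R i ω = path i) ∧ ∀ k, 1 ≤ k → k ≤ n → F k ω ∈ B k}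
        = (∏ k ∈ Finset.Icc 1 n, ν (path k) (B k)) * μ {ω | ∀ i ≤ n, R i ω = path i}

namespace CondIndepIncrements

variable [MeasurableSpace Ω] {μ : Measure Ω} [IsFiniteMeasure μ] {R : ℕ → Ω → E}
  {F : ℕ → Ω → V} {ν : E → Measure V}
  {ι : Type*} [Fintype ι] {t : ι → ℕ} {n : ℕ}

lemma map_restrict_pathCylinder (h : CondIndepIncrements μ R F ν) (ht : Function.Injective t)
    (ht1 : ∀ i, 1 ≤ t i) (htn : ∀ i, t i ≤ n) (q : Fin (n + 1) → E) :
    (μ.restrict (pathCylinder R n q)).map (fun ω i => F (t i) ω)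
      = μ (pathCylinder R n q) • Measure.pi fun i => ν (q (Fin.clamp (t i) n)) := by
  have := h.isProbabilityMeasure_ν
  have hΦ : Measurable fun ω i => F (t i) ω :=
    measurable_pi_lambda _ fun i => h.measurable_F (t i)
  have hC := pathCylinder_eq_setOf R n q
  refine ext_of_generate_finite _ generateFrom_pi.symm isPiSystem_pi ?_ ?_
  · rintro _ ⟨B, hB, rfl⟩
    -- constrain the increment at time `k` by `B i` if `k = t i`, and not at all otherwise
    let B' : ℕ → Set V := fun k => ⋂ (i) (_ : t i = k), B i
    have hB' : ∀ k, MeasurableSet (B' k) :=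
      fun k => .iInter fun i => .iInter fun _ => hB i (Set.mem_univ i)
    have hset : {ω | (∀ i ≤ n, R i ω = q (Fin.clamp i n)) ∧ ∀ k, 1 ≤ k → k ≤ n → F k ω ∈ B' k}
        = (fun ω i => F (t i) ω) ⁻¹' Set.univ.pi B ∩ pathCylinder R n q := by
      ext ω
      simp only [hC, B', Set.mem_ofPred_eq, Set.mem_inter_iff, Set.mem_preimage, Set.mem_univ_pi,
        Set.mem_iInter]
      constructor
      · rintro ⟨hR, hF⟩
        exact ⟨fun i => hF (t i) (ht1 i) (htn i) i rfl, hR⟩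
      · rintro ⟨hF, hR⟩
        exact ⟨hR, fun k _ _ i hik => hik ▸ hF i⟩
    have hprod : ∏ k ∈ Icc 1 n, ν (q (Fin.clamp k n)) (B' k)
        = ∏ i, ν (q (Fin.clamp (t i) n)) (B i) := by
      rw [← Finset.prod_subset (s₁ := univ.image t)]
      · rw [Finset.prod_image fun i _ j _ hij => ht hij]
        refine Finset.prod_congr rfl fun i _ => ?_
        simp only [B', ht.eq_iff, Set.iInter_iInter_eq_left]
      · intro k hk
        obtain ⟨i, -, rfl⟩ := Finset.mem_image.1 hk
        exact Finset.mem_Icc.2 ⟨ht1 i, htn i⟩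
      · intro k _ hk
        have : B' k = Set.univ := Set.iInter_eq_univ.2 fun i => Set.iInter_eq_univ.2 fun hik =>
          absurd (Finset.mem_image.2 ⟨i, Finset.mem_univ i, hik⟩) hk
        rw [this, measure_univ]
    rw [Measure.map_apply hΦ (.univ_pi fun i => hB i (Set.mem_univ i)),
      Measure.restrict_apply (hΦ (.univ_pi fun i => hB i (Set.mem_univ i))), ← hset,
      h.measure_inter_setOf_path n _ B' hB', ← hC, hprod, Measure.smul_apply, Measure.pi_pi,
      smul_eq_mul, mul_comm]
  · simp [Measure.map_apply hΦ .univ]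

lemma integrable_map_restrict_pathCylinder (h : CondIndepIncrements μ R F ν)
    (ht : Function.Injective t) (ht1 : ∀ i, 1 ≤ t i) (htn : ∀ i, t i ≤ n) (q : Fin (n + 1) → E)
    {φ : ι → V → ℝ} (hφ : ∀ i u, Integrable (φ i) (ν u)) :
    Integrable (fun x : ι → V => ∏ i, φ i (x i))
      ((μ.restrict (pathCylinder R n q)).map (fun ω i => F (t i) ω)) := by
  have := h.isProbabilityMeasure_ν
  rw [h.map_restrict_pathCylinder ht ht1 htn q]
  exact (Integrable.fintype_prod fun i => hφ i _).smul_measure (measure_ne_top _ _)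

lemma integrableOn_prod_pathCylinder (h : CondIndepIncrements μ R F ν)
    (ht : Function.Injective t) (ht1 : ∀ i, 1 ≤ t i) (htn : ∀ i, t i ≤ n) (q : Fin (n + 1) → E)
    {φ : ι → V → ℝ} (hφ : ∀ i u, Integrable (φ i) (ν u)) :
    IntegrableOn (fun ω => ∏ i, φ i (F (t i) ω)) (pathCylinder R n q) μ :=
  (integrable_map_measure (h.integrable_map_restrict_pathCylinder ht ht1 htn q hφ).1
    (measurable_pi_lambda _ fun i => h.measurable_F (t i)).aemeasurable).1
    (h.integrable_map_restrict_pathCylinder ht ht1 htn q hφ)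

lemma setIntegral_prod_pathCylinder (h : CondIndepIncrements μ R F ν)
    (ht : Function.Injective t) (ht1 : ∀ i, 1 ≤ t i) (htn : ∀ i, t i ≤ n) (q : Fin (n + 1) → E)
    {φ : ι → V → ℝ} (hφ : ∀ i u, Integrable (φ i) (ν u)) :
    ∫ ω in pathCylinder R n q, ∏ i, φ i (F (t i) ω) ∂μ
      = μ.real (pathCylinder R n q) * ∏ i, ∫ x, φ i x ∂ν (q (Fin.clamp (t i) n)) := by
  have := h.isProbabilityMeasure_ν
  rw [← integral_map (measurable_pi_lambda _ fun i => h.measurable_F (t i)).aemeasurable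
    (h.integrable_map_restrict_pathCylinder ht ht1 htn q hφ).1,
    h.map_restrict_pathCylinder ht ht1 htn q, integral_smul_measure,
    integral_fintype_prod_eq_prod, smul_eq_mul]
  rfl

end CondIndepIncrements

end CondIndepIncrements

section IteratedSum

variable {Ω E κ : Type*}

def incTuples (l N : ℕ) : Finset (Fin l → Fin (N + 1)) :=
  univ.filter fun s => (∀ i j : Fin l, i < j → s i < s j) ∧ ∀ i, 1 ≤ (s i : ℕ)

lemma injective_val_of_mem_incTuples {l N : ℕ} {s : Fin l → Fin (N + 1)}
    (hs : s ∈ incTuples l N) : Function.Injective fun i => (s i : ℕ) :=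
  Fin.val_injective.comp (StrictMono.injective fun _ _ hij => (mem_filter.1 hs).2.1 _ _ hij)

lemma one_le_of_mem_incTuples {l N : ℕ} {s : Fin l → Fin (N + 1)} (hs : s ∈ incTuples l N)
    (i : Fin l) : 1 ≤ (s i : ℕ) :=
  (mem_filter.1 hs).2.2 i

/-- `∑_{1 ≤ j_1 < ... < j_l ≤ N} F_{j_1} ⊗ ... ⊗ F_{j_l}`, with `(ℝ^κ)^{⊗ l}` realised as
`EuclideanSpace ℝ (Fin l → κ)`. -/
def iteratedSum (F : ℕ → Ω → EuclideanSpace ℝ κ) (l N : ℕ) (ω : Ω) :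
    EuclideanSpace ℝ (Fin l → κ) :=
  WithLp.toLp 2 fun j => ∑ s ∈ incTuples l N, ∏ i, F (s i) ω (j i)

lemma iterOcc_eq_card_filter [DecidableEq E] (R : ℕ → Ω → E) {l : ℕ} (u : Fin l → E) (N : ℕ)
    (ω : Ω) : iterOcc R u N ω = #{s ∈ incTuples l N | ∀ i, R (s i) ω = u i} := by
  simp only [iterOcc, incTuples, filter_filter, forall_and, and_assoc]

lemma sum_incTuples_eq_sum_iterOcc [Fintype E] [DecidableEq E] {M : Type*} [AddCommMonoid M]
    (R : ℕ → Ω → E) {l : ℕ} (g : (Fin l → E) → M) (N : ℕ) (ω : Ω) :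
    ∑ s ∈ incTuples l N, g (fun i => R (s i) ω) = ∑ u, iterOcc R u N ω • g u := by
  rw [← sum_fiberwise (incTuples l N) (fun s i => R (s i) ω)]
  refine sum_congr rfl fun u _ => ?_
  rw [sum_congr rfl fun s hs => congrArg g (mem_filter.1 hs).2, sum_const,
    iterOcc_eq_card_filter]
  simp only [funext_iff]

lemma iteratedSum_comp_eq_sum_iterOcc [Fintype E] [DecidableEq E] (R : ℕ → Ω → E)
    (a : E → EuclideanSpace ℝ κ) (l N : ℕ) (ω : Ω) :
    iteratedSum (fun k ω => a (R k ω)) l N ω = ∑ u : Fin l → E,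
      (iterOcc R u N ω : ℝ) • WithLp.toLp 2 fun j : Fin l → κ => ∏ i, a (u i) (j i) := by
  simp only [Nat.cast_smul_eq_nsmul]
  rw [← sum_incTuples_eq_sum_iterOcc R (fun u => WithLp.toLp 2 fun j : Fin l → κ =>
    ∏ i, a (u i) (j i)), ← WithLp.toLp_sum, iteratedSum]
  congr 1
  ext j
  simp only [Finset.sum_apply]

variable [Fintype κ] [MeasurableSpace Ω] {μ : Measure Ω} {F : ℕ → Ω → EuclideanSpace ℝ κ} {l N : ℕ}

lemma integrable_iteratedSum
    (hF : ∀ s ∈ incTuples l N, ∀ c : Fin l → κ, Integrable (fun ω => ∏ i, F (s i) ω (c i)) μ) :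
    Integrable (iteratedSum F l N) μ :=
  integrable_piLp_iff.2 fun j => integrable_finsetSum _ fun s hs => hF s hs j

lemma integral_iteratedSum_apply
    (hF : ∀ s ∈ incTuples l N, ∀ c : Fin l → κ, Integrable (fun ω => ∏ i, F (s i) ω (c i)) μ)
    (j : Fin l → κ) :
    (∫ ω, iteratedSum F l N ω ∂μ) j = ∑ s ∈ incTuples l N, ∫ ω, ∏ i, F (s i) ω (j i) ∂μ := by
  rw [eval_integral_piLp (integrable_piLp_iff.1 (integrable_iteratedSum hF))]
  exact integral_finsetSum _ fun s hs => hF s hs j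

end IteratedSum

namespace CondIndepIncrements

variable {Ω E κ : Type*} [Fintype κ] [MeasurableSpace Ω] [MeasurableSpace E] {μ : Measure Ω}
  [IsFiniteMeasure μ] {R : ℕ → Ω → E} {F : ℕ → Ω → EuclideanSpace ℝ κ}
  {ν : E → Measure (EuclideanSpace ℝ κ)} {l N n : ℕ}

lemma integrableOn_prod_coord_pathCylinder (h : CondIndepIncrements μ R F ν)
    (hν : ∀ u, Integrable (fun x => x) (ν u)) {s : Fin l → Fin (N + 1)} (hs : s ∈ incTuples l N)
    (hn : N ≤ n) (q : Fin (n + 1) → E) (c : Fin l → κ) :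
    IntegrableOn (fun ω => ∏ i, F (s i) ω (c i)) (pathCylinder R n q) μ :=
  h.integrableOn_prod_pathCylinder (injective_val_of_mem_incTuples hs)
    (one_le_of_mem_incTuples hs) (fun i => (Nat.lt_succ_iff.1 (s i).2).trans hn) q
    (φ := fun i x => x (c i)) fun i u => (hν u).eval_piLp (c i)

variable [Finite E]

lemma integrable_iteratedSum (h : CondIndepIncrements μ R F ν)
    (hν : ∀ u, Integrable (fun x => x) (ν u)) : Integrable (iteratedSum F l N) μ :=
  _root_.integrable_iteratedSum fun s hs c => by
    rw [← integrableOn_univ, ← iUnion_pathCylinder R N]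
    exact integrableOn_finite_iUnion.2 fun q =>
      h.integrableOn_prod_coord_pathCylinder hν hs le_rfl q c

variable [MeasurableSingletonClass E]

lemma setIntegral_iteratedSum_pathCylinder (h : CondIndepIncrements μ R F ν)
    (hν : ∀ u, Integrable (fun x => x) (ν u)) (hn : N ≤ n) (q : Fin (n + 1) → E) :
    ∫ ω in pathCylinder R n q, iteratedSum F l N ω ∂μ
      = ∫ ω in pathCylinder R n q, iteratedSum (fun k ω => ∫ x, x ∂ν (R k ω)) l N ω ∂μ := by
  have hmeans : ∀ s ∈ incTuples l N, ∀ c : Fin l → κ, Integrable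
      (fun ω => ∏ i, (∫ x, x ∂ν (R (s i) ω)) (c i)) (μ.restrict (pathCylinder R n q)) :=
    fun s _ c => (integrable_comp_pathPrefix h.measurable_R N
      fun p => ∏ i, (∫ x, x ∂ν (p (s i))) (c i)).restrict
  ext j
  rw [integral_iteratedSum_apply fun s hs c => h.integrableOn_prod_coord_pathCylinder hν hs hn q c,
    integral_iteratedSum_apply hmeans]
  refine sum_congr rfl fun s hs => ?_
  have hsn : ∀ i, (s i : ℕ) ≤ n := fun i => (Nat.lt_succ_iff.1 (s i).2).trans hn
  have hconst : ∀ ω ∈ pathCylinder R n q, ∏ i, (∫ x, x ∂ν (R (s i) ω)) (j i)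
      = ∏ i, (∫ x, x ∂ν (q (Fin.clamp (s i) n))) (j i) := fun ω hω =>
    prod_congr rfl fun i _ => by rw [apply_eq_of_mem_pathCylinder hω (hsn i)]
  rw [h.setIntegral_prod_pathCylinder (injective_val_of_mem_incTuples hs)
      (one_le_of_mem_incTuples hs) hsn q (φ := fun i x => x (j i))
      fun i u => (hν u).eval_piLp (j i),
    setIntegral_congr_fun (pathSigma_le h.measurable_R _ (measurableSet_pathCylinder R n q))
      hconst, setIntegral_const, smul_eq_mul]
  congr 1
  exact prod_congr rfl fun i _ => (eval_integral_piLp (integrable_piLp_iff.1 (hν _)) _).symm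

theorem condExp_iteratedSum (h : CondIndepIncrements μ R F ν)
    (hν : ∀ u, Integrable (fun x => x) (ν u)) :
    μ[iteratedSum F l N | pathSigma R]
      =ᵐ[μ] iteratedSum (fun k ω => ∫ x, x ∂ν (R k ω)) l N := by
  have hm := pathSigma_le h.measurable_R
  have : SigmaFinite (μ.trim hm) := inferInstance
  -- `Φ ∘ pathPrefix R N` is the right-hand side, hence `σ(R)`-measurable and integrable
  let Φ : (Fin (N + 1) → E) → EuclideanSpace ℝ (Fin l → κ) := fun p =>
    WithLp.toLp 2 fun j => ∑ s ∈ incTuples l N, ∏ i, (∫ x, x ∂ν (p (s i))) (j i)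
  have hmeans : Integrable (iteratedSum (fun k ω => ∫ x, x ∂ν (R k ω)) l N) μ :=
    integrable_comp_pathPrefix h.measurable_R N Φ
  refine (ae_eq_condExp_of_forall_setIntegral_eq hm (h.integrable_iteratedSum hν)
    (fun _ _ _ => hmeans.integrableOn) (fun t ht _ => ?_)
    (stronglyMeasurable_comp_pathPrefix R N Φ).aestronglyMeasurable).symm
  refine setIntegral_eq_of_isPiSystem hm (pathSigma_eq_generateFrom R N)
    (isPiSystem_pathCylinder R N) hmeans (h.integrable_iteratedSum hν) ?_ ?_ ht
  · rintro _ ⟨n, hn, q, rfl⟩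
    exact (h.setIntegral_iteratedSum_pathCylinder hν hn q).symm
  · have hC q := pathSigma_le h.measurable_R _ (measurableSet_pathCylinder R N q)
    rw [← setIntegral_univ, ← setIntegral_univ (f := iteratedSum F l N),
      ← iUnion_pathCylinder R N,
      integral_iUnion hC (pairwise_disjoint_pathCylinder R N) hmeans.integrableOn,
      integral_iUnion hC (pairwise_disjoint_pathCylinder R N)
        (h.integrable_iteratedSum hν).integrableOn]
    exact tsum_congr fun q => (h.setIntegral_iteratedSum_pathCylinder hν le_rfl q).symm

end CondIndepIncrements

theorem condexp_iterated_sum_eq_general {Ω : Type*} [m0 : MeasurableSpace Ω]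
    (μ : Measure Ω) [IsProbabilityMeasure μ]
    {E : Type*} [Fintype E] [DecidableEq E] [MeasurableSpace E] [MeasurableSingletonClass E]
    {d : ℕ}
    (R : ℕ → Ω → E) (hRmeas : ∀ n, Measurable (R n))
    (F : ℕ → Ω → EuclideanSpace ℝ (Fin d)) (hFmeas : ∀ n, Measurable (F n))
    (ν : E → Measure (EuclideanSpace ℝ (Fin d))) (hν : ∀ u, IsProbabilityMeasure (ν u))
    (hνint : ∀ u, Integrable (fun x => x) (ν u))
    -- conditionally on `σ(R)`, the `F_k` are independent with laws `ν(·|R_k)`: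
    (hHMC : ∀ (n : ℕ) (path : ℕ → E) (B : ℕ → Set (EuclideanSpace ℝ (Fin d))),
      (∀ k, MeasurableSet (B k)) →
      μ {ω | (∀ i ≤ n, R i ω = path i) ∧ ∀ k, 1 ≤ k → k ≤ n → F k ω ∈ B k}
        = (∏ k ∈ Finset.Icc 1 n, ν (path k) (B k)) * μ {ω | ∀ i ≤ n, R i ω = path i})
    (l : ℕ) (N : ℕ) :
    μ[fun ω => (WithLp.toLp 2 fun j : Fin l → Fin d =>
        ∑ s ∈ Finset.univ.filter (fun s : Fin l → Fin (N + 1) =>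
            (∀ i j' : Fin l, i < j' → s i < s j') ∧ ∀ i, 1 ≤ (s i : ℕ)),
          ∏ i : Fin l, F (s i) ω (j i) : EuclideanSpace ℝ (Fin l → Fin d))
      | ⨆ n : ℕ, MeasurableSpace.comap (R n) inferInstance]
    =ᵐ[μ] fun ω => ∑ u : Fin l → E,
        (iterOcc R u N ω : ℝ) • (WithLp.toLp 2 fun j : Fin l → Fin d =>
          ∏ i : Fin l, (∫ x, x ∂(ν (u i))) (j i) : EuclideanSpace ℝ (Fin l → Fin d)) := by
  have h : CondIndepIncrements μ R F ν := ⟨hRmeas, hFmeas, hν, hHMC⟩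
  filter_upwards [h.condExp_iteratedSum (l := l) (N := N) hνint] with ω hω
  exact hω.trans (iteratedSum_comp_eq_sum_iterOcc R (fun u => ∫ x, x ∂ν u) l N ω)

/-- Conditionally on `σ(R)`, the expectation of the `l`-th iterated sum of a hidden Markov
walk is the linear combination of iterated occupation times:
`E[Σ_{j_1<...<j_l} F_{j_1}⊗...⊗F_{j_l} | σ(R)] = Σ_u f(u_1)⊗...⊗f(u_l) · L_{u;N}(R)`,
where `f(u)` is the mean of `ν(·|u)`. -/
theorem condexp_iterated_sum_eq {Ω : Type*} [m0 : MeasurableSpace Ω]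
    (μ : Measure Ω) [IsProbabilityMeasure μ]
    {E : Type*} [Fintype E] [DecidableEq E] [MeasurableSpace E] [MeasurableSingletonClass E]
    {d : ℕ}
    (R : ℕ → Ω → E) (hRmeas : ∀ n, Measurable (R n))
    (F : ℕ → Ω → EuclideanSpace ℝ (Fin d)) (hFmeas : ∀ n, Measurable (F n))
    (hFint : ∀ n, Integrable (F n) μ)
    (ν : E → Measure (EuclideanSpace ℝ (Fin d))) (hν : ∀ u, IsProbabilityMeasure (ν u))
    (hνint : ∀ u, Integrable (fun x => x) (ν u))
    -- conditionally on `σ(R)`, the `F_k` are independent with laws `ν(·|R_k)`: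
    (hHMC : ∀ (n : ℕ) (path : ℕ → E) (B : ℕ → Set (EuclideanSpace ℝ (Fin d))),
      (∀ k, MeasurableSet (B k)) →
      μ {ω | (∀ i ≤ n, R i ω = path i) ∧ ∀ k, 1 ≤ k → k ≤ n → F k ω ∈ B k}
        = (∏ k ∈ Finset.Icc 1 n, ν (path k) (B k)) * μ {ω | ∀ i ≤ n, R i ω = path i})
    (l : ℕ) (hl : 1 ≤ l) (N : ℕ) (hN : 1 ≤ N) :
    μ[fun ω => (WithLp.toLp 2 fun j : Fin l → Fin d =>
        ∑ s ∈ Finset.univ.filter (fun s : Fin l → Fin (N + 1) =>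
            (∀ i j' : Fin l, i < j' → s i < s j') ∧ ∀ i, 1 ≤ (s i : ℕ)),
          ∏ i : Fin l, F (s i) ω (j i) : EuclideanSpace ℝ (Fin l → Fin d))
      | ⨆ n : ℕ, MeasurableSpace.comap (R n) inferInstance]
    =ᵐ[μ] fun ω => ∑ u : Fin l → E,
        (iterOcc R u N ω : ℝ) • (WithLp.toLp 2 fun j : Fin l → Fin d =>
          ∏ i : Fin l, (∫ x, x ∂(ν (u i))) (j i) : EuclideanSpace ℝ (Fin l → Fin d)) :=
  condexp_iterated_sum_eq_general (m0 := m0) μ R hRmeas F hFmeas ν hν hνint hHMC l N
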